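/- Let X ⊆ ℝ^d, ρ ≥ 1, and P a Borel probability measure on X with finite ρ-th moment, and let f : X → Y ⊆ ℝ^q be Lipschitz continuous with constant L_f with respect to the L_ρ-norm. Fix ε > 0 and let X̄ ⊆ X be a cubic compact set such that ∫_{X \ X̄} ‖x − c̄‖^ρ dP(x) ≤ ε^ρ / (2 L_f^ρ) for some c̄ ∈ X. Let R = {R_k}_{k=1}^N be a uniform partition of X̄ into N ≥ ( 2^{1/ρ} L_f d^{1/ρ} ‖X̄‖_∞ / ε )^d congruent hypercubic regions (where ‖X̄‖_∞ denotes the side length of the cube X̄), and let C be the set of centers of the hypercubes R_k. Set R* := R ∪ {X \ X̄} and C* := C ∪ {c̄}. Then for any θ ≥ 0, | sup_{Q ∈ B_θ(P)} W_ρ(f#Q, f#Δ_{R*,C*}#P) − sup_{Q ∈ B_θ(P)} W_ρ(f#Q, f#P) | ≤ ε. -/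

import Mathlib

open MeasureTheory ENNReal

noncomputable section

/-- The `L_ρ`-norm on `ℝ^n`: `(Σ_i |x_i|^ρ)^{1/ρ}`. -/
noncomputable def pnorm {n : ℕ} (ρ : ℝ) (x : Fin n → ℝ) : ℝ :=
  (∑ i, |x i| ^ ρ) ^ (1/ρ)

/-- The set of couplings `Γ(μ, ν)` of two measures. -/
def Couplings {β : Type*} [MeasurableSpace β] (μ ν : Measure β) :
    Set (Measure (β × β)) :=
  {γ | IsProbabilityMeasure γ ∧ γ.map Prod.fst = μ ∧ γ.map Prod.snd = ν}

/-- The ρ-Wasserstein distance on `ℝ^n` with ground cost the `L_ρ`-norm. -/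
noncomputable def WassP {n : ℕ} (ρ : ℝ) (μ ν : Measure (Fin n → ℝ)) : ℝ :=
  ((⨅ γ ∈ Couplings μ ν,
      ∫⁻ p, ENNReal.ofReal (pnorm ρ (p.1 - p.2) ^ ρ) ∂γ).toReal) ^ (1/ρ)

/-- `μ` has finite ρ-th moment w.r.t. the `L_ρ`-norm. -/
def HasFiniteMomentP {n : ℕ} (ρ : ℝ) (μ : Measure (Fin n → ℝ)) : Prop :=
  ∫⁻ x, ENNReal.ofReal (pnorm ρ x ^ ρ) ∂μ < ⊤

/-- A measurable partition of a set `X` into `N` regions. -/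
def IsMeasPartition {β : Type*} [MeasurableSpace β] {N : ℕ}
    (R : Fin N → Set β) (X : Set β) : Prop :=
  (∀ i, MeasurableSet (R i)) ∧ (⋃ i, R i) = X ∧ ∀ i j, i ≠ j → R i ∩ R j = ∅

/-- The quantization operator `Δ_{R,C}(x) = Σ_i c_i 1_{R_i}(x)`. -/
noncomputable def quantMap {β : Type*} [AddCommMonoid β] {N : ℕ}
    (R : Fin N → Set β) (c : Fin N → β) (x : β) : β :=
  ∑ i, (R i).indicator (fun _ => c i) x

/-- The ρ-Wasserstein ball `B_θ(P)`. -/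
def WassBallP {n : ℕ} (ρ θ : ℝ) (P : Measure (Fin n → ℝ)) (X : Set (Fin n → ℝ)) :
    Set (Measure (Fin n → ℝ)) :=
  {Q | IsProbabilityMeasure Q ∧ Q X = 1 ∧ HasFiniteMomentP ρ Q ∧ WassP ρ P Q ≤ θ}

/-! The triangle inequality for `W_ρ` (glue two couplings along their common marginal by
disintegration, then apply Minkowski's inequality) shows that for every `Q` the distances
`W_ρ(f#Q, f#Δ#P)` and `W_ρ(f#Q, f#P)` differ by at most `W_ρ(f#P, f#Δ#P)`; hence so do their
suprema over the ball. That last distance is at most `ε`, as witnessed by the coupling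
`(f, f ∘ Δ)#P`: a point of `X̄` lies within `L_ρ`-distance `d^{1/ρ} s / N^{1/d}` of the centre of
its cell, which by the choice of `N` and the Lipschitz bound costs at most `ε^ρ / 2`, and on
`X \ X̄` the quantizer is the constant `c̄`, so the tail condition contributes another `ε^ρ / 2`. -/

section PNorm

variable {n : ℕ} {ρ : ℝ}

lemma pnorm_nonneg (x : Fin n → ℝ) : 0 ≤ pnorm ρ x :=
  Real.rpow_nonneg (Finset.sum_nonneg fun _ _ => Real.rpow_nonneg (abs_nonneg _) _) _

lemma pnorm_sub_comm (x y : Fin n → ℝ) : pnorm ρ (x - y) = pnorm ρ (y - x) := by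
  simp only [pnorm, Pi.sub_apply, abs_sub_comm]

lemma pnorm_add_le (hρ : 1 ≤ ρ) (x y : Fin n → ℝ) :
    pnorm ρ (x + y) ≤ pnorm ρ x + pnorm ρ y := by
  simpa [pnorm] using Real.Lp_add_le Finset.univ x y hρ

lemma pnorm_sub_le_add (hρ : 1 ≤ ρ) (x y z : Fin n → ℝ) :
    pnorm ρ (x - z) ≤ pnorm ρ (x - y) + pnorm ρ (y - z) := by
  simpa using pnorm_add_le hρ (x - y) (y - z)

@[fun_prop]
lemma measurable_pnorm : Measurable (pnorm ρ : (Fin n → ℝ) → ℝ) := by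
  unfold pnorm; fun_prop

lemma pnorm_le_of_abs_le (hρ : 0 < ρ) {x : Fin n → ℝ} {r : ℝ} (hr : 0 ≤ r)
    (hx : ∀ i, |x i| ≤ r) : pnorm ρ x ≤ (n : ℝ) ^ (1 / ρ) * r := by
  have hsum : ∑ i, |x i| ^ ρ ≤ n * r ^ ρ := by
    simpa using Finset.sum_le_sum (s := Finset.univ) fun i _ =>
      Real.rpow_le_rpow (abs_nonneg _) (hx i) hρ.le
  calc pnorm ρ x ≤ ((n : ℝ) * r ^ ρ) ^ (1 / ρ) :=
        Real.rpow_le_rpow (Finset.sum_nonneg fun _ _ => by positivity) hsum (by positivity)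
    _ = (n : ℝ) ^ (1 / ρ) * r := by
        rw [Real.mul_rpow (by positivity) (by positivity), ← Real.rpow_mul hr,
          mul_one_div_cancel hρ.ne', Real.rpow_one]

end PNorm

section Wasserstein

variable {n : ℕ} {ρ : ℝ}

def transportCost (ρ : ℝ) (γ : Measure ((Fin n → ℝ) × (Fin n → ℝ))) : ℝ≥0∞ :=
  ∫⁻ p, ENNReal.ofReal (pnorm ρ (p.1 - p.2) ^ ρ) ∂γ

def eWassP (ρ : ℝ) (μ ν : Measure (Fin n → ℝ)) : ℝ≥0∞ :=
  (⨅ γ ∈ Couplings μ ν, transportCost ρ γ) ^ (1 / ρ)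

lemma toReal_eWassP (μ ν : Measure (Fin n → ℝ)) : (eWassP ρ μ ν).toReal = WassP ρ μ ν :=
  (ENNReal.toReal_rpow _ _).symm

lemma eWassP_eq_iInf (hρ : 0 < ρ) (μ ν : Measure (Fin n → ℝ)) :
    eWassP ρ μ ν = ⨅ γ ∈ Couplings μ ν, transportCost ρ γ ^ (1 / ρ) := by
  simp only [eWassP, ← ENNReal.orderIsoRpow_apply _ (one_div_pos.2 hρ), OrderIso.map_iInf]

lemma eWassP_le_transportCost (hρ : 0 < ρ) {μ ν : Measure (Fin n → ℝ)}
    {γ : Measure ((Fin n → ℝ) × (Fin n → ℝ))} (hγ : γ ∈ Couplings μ ν) :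
    eWassP ρ μ ν ≤ transportCost ρ γ ^ (1 / ρ) :=
  (eWassP_eq_iInf hρ μ ν).trans_le (iInf₂_le γ hγ)

lemma lintegral_pnorm_sub_rpow_triangle {α : Type*} [MeasurableSpace α] (hρ : 1 ≤ ρ)
    (μ : Measure α) {u v w : α → Fin n → ℝ} (hu : Measurable u) (hv : Measurable v)
    (hw : Measurable w) :
    (∫⁻ t, ENNReal.ofReal (pnorm ρ (u t - w t) ^ ρ) ∂μ) ^ (1 / ρ) ≤
      (∫⁻ t, ENNReal.ofReal (pnorm ρ (u t - v t) ^ ρ) ∂μ) ^ (1 / ρ) +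
        (∫⁻ t, ENNReal.ofReal (pnorm ρ (v t - w t) ^ ρ) ∂μ) ^ (1 / ρ) := by
  have hρ0 : 0 ≤ ρ := by linarith
  simp only [← ENNReal.ofReal_rpow_of_nonneg (pnorm_nonneg _) hρ0]
  refine le_trans ?_ (ENNReal.lintegral_Lp_add_le (by fun_prop) (by fun_prop) hρ)
  gcongr with t
  rw [Pi.add_apply, ← ENNReal.ofReal_add (pnorm_nonneg _) (pnorm_nonneg _)]
  exact ENNReal.ofReal_le_ofReal (pnorm_sub_le_add hρ _ _ _)

lemma transportCost_map {α : Type*} [MeasurableSpace α] (μ : Measure α)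
    {g : α → (Fin n → ℝ) × (Fin n → ℝ)} (hg : Measurable g) :
    transportCost ρ (μ.map g) = ∫⁻ t, ENNReal.ofReal (pnorm ρ ((g t).1 - (g t).2) ^ ρ) ∂μ :=
  lintegral_map (by fun_prop) hg

lemma map_prodMk_mem_couplings {α : Type*} [MeasurableSpace α] (P : Measure α)
    [IsProbabilityMeasure P] {u v : α → Fin n → ℝ} (hu : Measurable u) (hv : Measurable v) :
    P.map (fun x => (u x, v x)) ∈ Couplings (P.map u) (P.map v) :=
  ⟨Measure.isProbabilityMeasure_map (by fun_prop),
    by rw [Measure.map_map measurable_fst (by fun_prop)]; rfl,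
    by rw [Measure.map_map measurable_snd (by fun_prop)]; rfl⟩

lemma eWassP_map_le {α : Type*} [MeasurableSpace α] (hρ : 0 < ρ) (P : Measure α)
    [IsProbabilityMeasure P] {u v : α → Fin n → ℝ} (hu : Measurable u) (hv : Measurable v) :
    eWassP ρ (P.map u) (P.map v) ≤
      (∫⁻ x, ENNReal.ofReal (pnorm ρ (u x - v x) ^ ρ) ∂P) ^ (1 / ρ) := by
  simpa [transportCost_map P (hu.prodMk hv)] using
    eWassP_le_transportCost hρ (map_prodMk_mem_couplings P hu hv)

lemma map_swap_mem_couplings {β : Type*} [MeasurableSpace β] {μ ν : Measure β}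
    {γ : Measure (β × β)} (hγ : γ ∈ Couplings μ ν) : γ.map Prod.swap ∈ Couplings ν μ := by
  obtain ⟨hprob, hfst, hsnd⟩ := hγ
  exact ⟨Measure.isProbabilityMeasure_map measurable_swap.aemeasurable,
    by rwa [Measure.map_map measurable_fst measurable_swap],
    by rwa [Measure.map_map measurable_snd measurable_swap]⟩

lemma eWassP_comm (hρ : 0 < ρ) (μ ν : Measure (Fin n → ℝ)) : eWassP ρ μ ν = eWassP ρ ν μ := by
  suffices h : ∀ μ ν : Measure (Fin n → ℝ), eWassP ρ ν μ ≤ eWassP ρ μ ν from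
    le_antisymm (h ν μ) (h μ ν)
  intro μ ν
  rw [eWassP_eq_iInf hρ μ ν]
  refine le_iInf₂ fun γ hγ => (eWassP_le_transportCost hρ (map_swap_mem_couplings hγ)).trans ?_
  rw [transportCost_map γ measurable_swap]
  simp only [Prod.fst_swap, Prod.snd_swap, pnorm_sub_comm, le_refl, transportCost]

end Wasserstein

section Gluing

open ProbabilityTheory

lemma map_compProd_prod_fst {α β γ : Type*} [MeasurableSpace α] [MeasurableSpace β]
    [MeasurableSpace γ] (ν : Measure α) [SFinite ν] (κ : Kernel α β) (η : Kernel α γ)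
    [IsSFiniteKernel κ] [IsMarkovKernel η] :
    (ν ⊗ₘ (κ ×ₖ η)).map (fun t => (t.1, t.2.1)) = ν ⊗ₘ κ := by
  rw [show (fun t : α × β × γ => (t.1, t.2.1)) = Prod.map id Prod.fst from rfl,
    ← Measure.compProd_map measurable_fst, ← Kernel.fst_eq, Kernel.fst_prod]

lemma map_compProd_prod_snd {α β γ : Type*} [MeasurableSpace α] [MeasurableSpace β]
    [MeasurableSpace γ] (ν : Measure α) [SFinite ν] (κ : Kernel α β) (η : Kernel α γ)
    [IsMarkovKernel κ] [IsSFiniteKernel η] :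
    (ν ⊗ₘ (κ ×ₖ η)).map (fun t => (t.1, t.2.2)) = ν ⊗ₘ η := by
  rw [show (fun t : α × β × γ => (t.1, t.2.2)) = Prod.map id Prod.snd from rfl,
    ← Measure.compProd_map measurable_snd, ← Kernel.snd_eq, Kernel.snd_prod]

lemma exists_glued_of_mem_couplings {β : Type*} [MeasurableSpace β] [StandardBorelSpace β]
    [Nonempty β] {μ ν ξ : Measure β} {γ₁ γ₂ : Measure (β × β)} (h₁ : γ₁ ∈ Couplings μ ν)
    (h₂ : γ₂ ∈ Couplings ν ξ) :
    ∃ T : Measure (β × β × β), IsProbabilityMeasure T ∧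
      T.map (fun t => (t.2.1, t.1)) = γ₁ ∧ T.map (fun t => (t.1, t.2.2)) = γ₂ := by
  obtain ⟨hprob₁, -, hsnd₁⟩ := h₁
  obtain ⟨hprob₂, hfst₂, -⟩ := h₂
  have : IsProbabilityMeasure ν := hsnd₁ ▸ Measure.isProbabilityMeasure_map (by fun_prop)
  set η := γ₁.map Prod.swap
  have hη : η.fst = ν := by
    rw [← hsnd₁, Measure.fst, Measure.map_map measurable_fst measurable_swap]; rfl
  refine ⟨ν ⊗ₘ (η.condKernel ×ₖ γ₂.condKernel), inferInstance, ?_, ?_⟩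
  · have h : (ν ⊗ₘ (η.condKernel ×ₖ γ₂.condKernel)).map (fun t => (t.1, t.2.1)) = η := by
      rw [map_compProd_prod_fst, ← hη, η.disintegrate]
    rw [show (fun t : β × β × β => (t.2.1, t.1)) = Prod.swap ∘ fun t => (t.1, t.2.1) from rfl,
      ← Measure.map_map measurable_swap (by fun_prop), h,
      Measure.map_map measurable_swap measurable_swap, Prod.swap_swap_eq, Measure.map_id]
  · rw [map_compProd_prod_snd, ← hfst₂]
    exact γ₂.disintegrate _

end Gluing

lemma eWassP_triangle {n : ℕ} {ρ : ℝ} (hρ : 1 ≤ ρ) (μ ν ξ : Measure (Fin n → ℝ)) :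
    eWassP ρ μ ξ ≤ eWassP ρ μ ν + eWassP ρ ν ξ := by
  have hρ0 : 0 < ρ := by linarith
  rw [eWassP_eq_iInf hρ0 μ ν, eWassP_eq_iInf hρ0 ν ξ]
  refine ENNReal.le_iInf_add_iInf fun γ₁ γ₂ => ENNReal.le_iInf_add_iInf fun h₁ h₂ => ?_
  obtain ⟨T, hT, hT₁, hT₂⟩ := exists_glued_of_mem_couplings h₁ h₂
  have hγ : T.map (fun t => (t.2.1, t.2.2)) ∈ Couplings μ ξ :=
    ⟨Measure.isProbabilityMeasure_map (by fun_prop),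
      by rw [← h₁.2.1, ← hT₁, Measure.map_map measurable_fst (by fun_prop),
        Measure.map_map measurable_fst (by fun_prop)]; rfl,
      by rw [← h₂.2.2, ← hT₂, Measure.map_map measurable_snd (by fun_prop),
        Measure.map_map measurable_snd (by fun_prop)]; rfl⟩
  refine (eWassP_le_transportCost hρ0 hγ).trans ?_
  rw [← hT₁, ← hT₂, transportCost_map _ (by fun_prop), transportCost_map _ (by fun_prop),
    transportCost_map _ (by fun_prop)]
  exact lintegral_pnorm_sub_rpow_triangle hρ T (by fun_prop) (by fun_prop) (by fun_prop)

lemma ENNReal.abs_toReal_sub_toReal_le {a b c : ℝ≥0∞} (hc : c ≠ ∞) (hab : a ≤ b + c)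
    (hba : b ≤ a + c) : |a.toReal - b.toReal| ≤ c.toReal := by
  rcases eq_or_ne a ∞ with rfl | ha
  · obtain rfl : b = ∞ := by simpa [hc] using hab
    simp
  rcases eq_or_ne b ∞ with rfl | hb
  · simp [ha, hc] at hba
  have h₁ := ENNReal.toReal_mono (ENNReal.add_ne_top.2 ⟨hb, hc⟩) hab
  have h₂ := ENNReal.toReal_mono (ENNReal.add_ne_top.2 ⟨ha, hc⟩) hba
  rw [ENNReal.toReal_add hb hc] at h₁
  rw [ENNReal.toReal_add ha hc] at h₂
  exact abs_sub_le_iff.2 ⟨by linarith, by linarith⟩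

lemma eWassP_map_le_ofReal {α : Type*} [MeasurableSpace α] {n : ℕ} {ρ ε : ℝ} (hρ : 0 < ρ)
    (hε : 0 ≤ ε) (P : Measure α) [IsProbabilityMeasure P] {u v : α → Fin n → ℝ}
    (hu : Measurable u) (hv : Measurable v)
    (h : ∫⁻ x, ENNReal.ofReal (pnorm ρ (u x - v x) ^ ρ) ∂P ≤ ENNReal.ofReal (ε ^ ρ)) :
    eWassP ρ (P.map u) (P.map v) ≤ ENNReal.ofReal ε := by
  refine (eWassP_map_le hρ P hu hv).trans ((ENNReal.rpow_le_rpow h (by positivity)).trans_eq ?_)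
  rw [← ENNReal.ofReal_rpow_of_nonneg hε hρ.le, ← ENNReal.rpow_mul, mul_one_div_cancel hρ.ne',
    ENNReal.rpow_one]

lemma abs_WassP_sub_WassP_le {n : ℕ} {ρ ε : ℝ} (hρ : 1 ≤ ρ) (hε : 0 ≤ ε)
    (μ : Measure (Fin n → ℝ)) {ν ν' : Measure (Fin n → ℝ)}
    (h : eWassP ρ ν ν' ≤ ENNReal.ofReal ε) : |WassP ρ μ ν' - WassP ρ μ ν| ≤ ε := by
  rw [← toReal_eWassP, ← toReal_eWassP]
  refine (ENNReal.abs_toReal_sub_toReal_le (h.trans_lt ENNReal.ofReal_lt_top).ne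
    (eWassP_triangle hρ _ _ _) ?_).trans (ENNReal.toReal_le_of_le_ofReal hε h)
  rw [eWassP_comm (by linarith) ν]
  exact eWassP_triangle hρ _ _ _

section SupComparison

variable {M : Type*} {S : Set M} {g h : M → ℝ} {ε : ℝ}

lemma bddAbove_image_of_le_add (hle : ∀ x ∈ S, h x ≤ g x + ε) (hg : BddAbove (g '' S)) :
    BddAbove (h '' S) := by
  obtain ⟨b, hb⟩ := hg
  refine ⟨b + ε, ?_⟩
  rintro _ ⟨x, hx, rfl⟩
  linarith [hle x hx, hb ⟨x, hx, rfl⟩]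

lemma csSup_image_le_csSup_image_add (hS : S.Nonempty) (hle : ∀ x ∈ S, h x ≤ g x + ε)
    (hg : BddAbove (g '' S)) : sSup (h '' S) ≤ sSup (g '' S) + ε := by
  refine csSup_le (hS.image h) ?_
  rintro _ ⟨x, hx, rfl⟩
  linarith [hle x hx, le_csSup hg ⟨x, hx, rfl⟩]

lemma abs_sSup_image_sub_sSup_image_le (hε : 0 ≤ ε) (hgh : ∀ x ∈ S, |g x - h x| ≤ ε) :
    |sSup (g '' S) - sSup (h '' S)| ≤ ε := by
  have hg : ∀ x ∈ S, g x ≤ h x + ε := fun x hx => by linarith [(abs_le.1 (hgh x hx)).2]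
  have hh : ∀ x ∈ S, h x ≤ g x + ε := fun x hx => by linarith [(abs_le.1 (hgh x hx)).1]
  rcases S.eq_empty_or_nonempty with rfl | hS
  · simpa using hε
  by_cases hgb : BddAbove (g '' S)
  · have hhb := bddAbove_image_of_le_add hh hgb
    exact abs_sub_le_iff.2 ⟨by linarith [csSup_image_le_csSup_image_add hS hg hhb],
      by linarith [csSup_image_le_csSup_image_add hS hh hgb]⟩
  · have hhb : ¬BddAbove (h '' S) := fun hhb => hgb (bddAbove_image_of_le_add hg hhb)
    simpa [Real.sSup_of_not_bddAbove hgb, Real.sSup_of_not_bddAbove hhb] using hε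

end SupComparison

section Quantization

variable {β : Type*} {N : ℕ} {R : Fin N → Set β} {x : β}

lemma quantMap_eq_of_mem [AddCommMonoid β] {k : Fin N} (hk : x ∈ R k)
    (hother : ∀ j ≠ k, x ∉ R j) (c : Fin N → β) : quantMap R c x = c k := by
  rw [quantMap, Finset.sum_eq_single k (fun j _ hj => Set.indicator_of_notMem (hother j hj) _)
    (by simp), Set.indicator_of_mem hk]

namespace IsMeasPartition

variable [MeasurableSpace β] {A X : Set β}

lemma measurableSet (hR : IsMeasPartition R A) : MeasurableSet A :=
  hR.2.1 ▸ MeasurableSet.iUnion hR.1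

lemma measurable_quantMap_snoc [AddCommMonoid β] [MeasurableAdd₂ β] (hR : IsMeasPartition R A)
    (hX : MeasurableSet X) (c : Fin N → β) (c' : β) :
    Measurable (quantMap (Fin.snoc R (X \ A)) (Fin.snoc c c')) :=
  Finset.measurable_sum _ fun j _ => measurable_const.indicator <| by
    induction j using Fin.lastCases <;> simp [hX.diff hR.measurableSet, hR.1]

lemma quantMap_snoc_of_mem [AddCommMonoid β] (hR : IsMeasPartition R A) (hx : x ∈ A)
    (c : Fin N → β) (c' : β) :
    ∃ k, x ∈ R k ∧ quantMap (Fin.snoc R (X \ A)) (Fin.snoc c c') x = c k := by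
  obtain ⟨k, hk⟩ := Set.mem_iUnion.1 (hR.2.1 ▸ hx)
  refine ⟨k, hk, (quantMap_eq_of_mem (k := k.castSucc) (by simpa using hk) ?_ _).trans (by simp)⟩
  intro j hj
  induction j using Fin.lastCases with
  | last => simp [hx]
  | cast i =>
    have hik : i ≠ k := fun h => hj (h ▸ rfl)
    simpa using fun hi => (hR.2.2 i k hik).subset ⟨hi, hk⟩

lemma quantMap_snoc_of_mem_diff [AddCommMonoid β] (hR : IsMeasPartition R A) (hx : x ∈ X \ A)
    (c : Fin N → β) (c' : β) : quantMap (Fin.snoc R (X \ A)) (Fin.snoc c c') x = c' := by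
  refine (quantMap_eq_of_mem (k := Fin.last N) (by simpa using hx) ?_ _).trans (by simp)
  intro j hj
  induction j using Fin.lastCases with
  | last => exact absurd rfl hj
  | cast i => simpa using fun hi => hx.2 (hR.2.1 ▸ Set.mem_iUnion_of_mem i hi)

end IsMeasPartition

end Quantization

lemma lintegral_le_add_of_le_on {α : Type*} [MeasurableSpace α] {P : Measure α}
    [IsProbabilityMeasure P] {X A : Set α} (hX : MeasurableSet X) (hA : MeasurableSet A)
    (hAX : A ⊆ X) (hPX : P X = 1) {F : α → ℝ≥0∞} {a b : ℝ≥0∞} (hFA : ∀ x ∈ A, F x ≤ a)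
    (hFX : ∫⁻ x in X \ A, F x ∂P ≤ b) : ∫⁻ x, F x ∂P ≤ a + b := by
  have hrestrict : P.restrict X = P :=
    Measure.restrict_eq_self_of_ae_mem ((ae_mem_iff_measure_eq hX.nullMeasurableSet).2
      (by rw [hPX, measure_univ]))
  have hFA' : ∫⁻ x in A, F x ∂P ≤ a :=
    calc ∫⁻ x in A, F x ∂P ≤ ∫⁻ _ in A, a ∂P := setLIntegral_mono_ae' hA (ae_of_all _ hFA)
      _ = a * P A := setLIntegral_const _ _
      _ ≤ a := mul_le_of_le_one_right' prob_le_one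
  rw [← hrestrict, ← lintegral_inter_add_sdiff _ X hA, Set.inter_eq_self_of_subset_right hAX]
  exact add_le_add hFA' hFX

lemma integrable_pnorm_sub_rpow {n : ℕ} {ρ : ℝ} (hρ : 1 ≤ ρ) {P : Measure (Fin n → ℝ)}
    [IsFiniteMeasure P] (hP : HasFiniteMomentP ρ P) (y : Fin n → ℝ) :
    Integrable (fun x => pnorm ρ (x - y) ^ ρ) P := by
  have hρ0 : 0 < ρ := by linarith
  refine ⟨(by fun_prop : Measurable fun x => pnorm ρ (x - y) ^ ρ).aestronglyMeasurable, ?_⟩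
  rw [hasFiniteIntegral_iff_ofReal (ae_of_all _ fun _ => Real.rpow_nonneg (pnorm_nonneg _) _),
    ← ENNReal.rpow_lt_top_iff_of_pos (one_div_pos.2 hρ0)]
  refine (lintegral_pnorm_sub_rpow_triangle hρ P measurable_id measurable_const
    measurable_const (v := 0)).trans_lt (ENNReal.add_lt_top.2 ⟨?_, ?_⟩)
  · simpa using ENNReal.rpow_lt_top_of_nonneg (by positivity) hP.ne
  · simpa using ENNReal.rpow_lt_top_of_nonneg (by positivity)
      (ENNReal.mul_ne_top ENNReal.ofReal_ne_top (measure_ne_top P _))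

lemma mul_div_rpow_inv_le {D s ε t N : ℝ} (hD : 0 ≤ D) (hs : 0 ≤ s) (hε : 0 < ε) (ht : 0 < t)
    (hN : (D * s / ε) ^ t ≤ N) : D * (s / N ^ (1 / t)) ≤ ε := by
  have hB : 0 ≤ D * s / ε := by positivity
  have hNB : D * s / ε ≤ N ^ (1 / t) := by
    rw [one_div, Real.le_rpow_inv_iff_of_pos hB ((Real.rpow_nonneg hB _).trans hN) ht]
    exact hN
  rcases (Real.rpow_nonneg ((Real.rpow_nonneg hB _).trans hN) (1 / t)).eq_or_lt with h0 | hpos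
  · rw [← h0]
    simpa using hε.le
  rw [← mul_div_assoc, div_le_iff₀ hpos]
  rw [div_le_iff₀ hε] at hNB
  linarith

lemma rpow_le_div_two {ρ a ε : ℝ} (hρ : 0 < ρ) (ha : 0 ≤ a) (h : 2 ^ (1 / ρ) * a ≤ ε) :
    a ^ ρ ≤ ε ^ ρ / 2 := by
  have h2 : (2 ^ (1 / ρ) * a) ^ ρ = 2 * a ^ ρ := by
    rw [Real.mul_rpow (by positivity) ha, ← Real.rpow_mul (by norm_num),
      one_div_mul_cancel hρ.ne', Real.rpow_one]
  have := Real.rpow_le_rpow (by positivity) h hρ.le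
  linarith

section Lipschitz

variable {n m : ℕ} {ρ Lf : ℝ} {f : (Fin n → ℝ) → (Fin m → ℝ)}

lemma pnorm_sub_rpow_le_of_lipschitz (hρ : 0 < ρ) (hLf : 0 ≤ Lf)
    (hLip : ∀ x y, pnorm ρ (f x - f y) ≤ Lf * pnorm ρ (x - y)) (x y : Fin n → ℝ) :
    pnorm ρ (f x - f y) ^ ρ ≤ Lf ^ ρ * pnorm ρ (x - y) ^ ρ := by
  rw [← Real.mul_rpow hLf (pnorm_nonneg _)]
  exact Real.rpow_le_rpow (pnorm_nonneg _) (hLip x y) hρ.le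

lemma pnorm_sub_center_rpow_le (hρ : 0 < ρ) (hLf : 0 ≤ Lf)
    (hLip : ∀ x y, pnorm ρ (f x - f y) ≤ Lf * pnorm ρ (x - y)) {a c x : Fin n → ℝ} {h ε : ℝ}
    (hh : 0 ≤ h) (hmesh : 2 ^ (1 / ρ) * (Lf * ((n : ℝ) ^ (1 / ρ) * h)) ≤ ε)
    (hx : ∀ i, a i ≤ x i ∧ x i ≤ a i + h) (hc : ∀ i, c i = a i + h / 2) :
    pnorm ρ (f x - f c) ^ ρ ≤ ε ^ ρ / 2 := by
  have hdist : pnorm ρ (x - c) ≤ (n : ℝ) ^ (1 / ρ) * h :=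
    pnorm_le_of_abs_le hρ hh fun i => by
      rw [Pi.sub_apply, hc i, abs_le]
      constructor <;> linarith [hx i]
  refine rpow_le_div_two hρ (pnorm_nonneg _) (le_trans ?_ hmesh)
  gcongr
  exact (hLip x c).trans (by gcongr)

lemma setLIntegral_pnorm_sub_rpow_le_of_lipschitz (hρ : 0 < ρ) (hLf : 0 ≤ Lf)
    (hLip : ∀ x y, pnorm ρ (f x - f y) ≤ Lf * pnorm ρ (x - y)) {P : Measure (Fin n → ℝ)}
    {S : Set (Fin n → ℝ)} {y : Fin n → ℝ}
    (hint : IntegrableOn (fun x => pnorm ρ (x - y) ^ ρ) S P) :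
    ∫⁻ x in S, ENNReal.ofReal (pnorm ρ (f x - f y) ^ ρ) ∂P ≤
      ENNReal.ofReal (Lf ^ ρ * ∫ x in S, pnorm ρ (x - y) ^ ρ ∂P) := by
  rw [← integral_const_mul, ofReal_integral_eq_lintegral_ofReal (hint.const_mul _)
    (ae_of_all _ fun _ => mul_nonneg (by positivity) (Real.rpow_nonneg (pnorm_nonneg _) _))]
  exact lintegral_mono fun x =>
    ENNReal.ofReal_le_ofReal (pnorm_sub_rpow_le_of_lipschitz hρ hLf hLip x y)

end Lipschitz

lemma two_rpow_mul_cell_diam_le {d N : ℕ} {ρ ε Lf s : ℝ} (hρ : 0 < ρ) (hε : 0 < ε)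
    (hLf : 0 ≤ Lf) (hs : 0 ≤ s)
    (hN : (2 ^ (1 / ρ) * Lf * (d : ℝ) ^ (1 / ρ) * s / ε) ^ (d : ℝ) ≤ (N : ℝ)) :
    2 ^ (1 / ρ) * (Lf * ((d : ℝ) ^ (1 / ρ) * (s / (N : ℝ) ^ (1 / (d : ℝ))))) ≤ ε := by
  rcases d.eq_zero_or_pos with rfl | hd
  · simp [hρ.ne', hε.le]
  convert mul_div_rpow_inv_le (by positivity) hs hε (by positivity) hN using 1
  ring

theorem stmt8_general {d q N : ℕ} (ρ : ℝ) (hρ : 1 ≤ ρ) (θ : ℝ)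
    (ε : ℝ) (hε : 0 < ε) (Lf : ℝ) (hLf : 0 < Lf)
    (X : Set (Fin d → ℝ)) (hXm : MeasurableSet X)
    (P : Measure (Fin d → ℝ)) (hP : IsProbabilityMeasure P) (hPX : P X = 1)
    (hPm : HasFiniteMomentP ρ P)
    (f : (Fin d → ℝ) → (Fin q → ℝ)) (hf : Measurable f)
    (hLip : ∀ x y, pnorm ρ (f x - f y) ≤ Lf * pnorm ρ (x - y))
    -- `X̄` is a cube of side length `s = ‖X̄‖_∞` contained in `X`
    (Xbar : Set (Fin d → ℝ)) (s : ℝ) (hs : 0 ≤ s)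
    (hXbarX : Xbar ⊆ X)
    -- the tail condition around `c̄ ∈ X`
    (cbar : Fin d → ℝ)
    (htail : ∫ x in X \ Xbar, pnorm ρ (x - cbar) ^ ρ ∂P ≤ ε ^ ρ / (2 * Lf ^ ρ))
    -- `N ≥ (2^{1/ρ} L_f d^{1/ρ} ‖X̄‖_∞ / ε)^d`
    (hN : (2 ^ (1/ρ) * Lf * (d : ℝ) ^ (1/ρ) * s / ε) ^ (d : ℝ) ≤ (N : ℝ))
    -- `R` is a uniform partition of `X̄` into `N` hypercubic regions of side
    -- `s / N^{1/d}`, and `C` consists of the centers of those hypercubes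
    (R : Fin N → Set (Fin d → ℝ)) (hR : IsMeasPartition R Xbar)
    (c : Fin N → (Fin d → ℝ))
    (hcube : ∀ k, ∃ a : Fin d → ℝ,
      R k ⊆ {x | ∀ i, a i ≤ x i ∧ x i ≤ a i + s / (N : ℝ) ^ (1/(d : ℝ))} ∧
      ∀ i, c k i = a i + (s / (N : ℝ) ^ (1/(d : ℝ))) / 2) :
    |sSup ((fun Q => WassP ρ (Q.map f)
          ((P.map (quantMap (Fin.snoc R (X \ Xbar)) (Fin.snoc c cbar))).map f)) ''
        WassBallP ρ θ P X) -
      sSup ((fun Q => WassP ρ (Q.map f) (P.map f)) '' WassBallP ρ θ P X)| ≤ ε := by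
  have hρ0 : 0 < ρ := by linarith
  set Δ := quantMap (Fin.snoc R (X \ Xbar)) (Fin.snoc c cbar)
  have hΔm : Measurable Δ := hR.measurable_quantMap_snoc hXm c cbar
  have hcost_cell : ∀ x ∈ Xbar,
      ENNReal.ofReal (pnorm ρ (f x - f (Δ x)) ^ ρ) ≤ ENNReal.ofReal (ε ^ ρ / 2) := by
    intro x hx
    obtain ⟨k, hk, hΔx⟩ : ∃ k, x ∈ R k ∧ Δ x = c k := hR.quantMap_snoc_of_mem hx c cbar
    obtain ⟨a, hRa, hc⟩ := hcube k
    rw [hΔx]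
    exact ENNReal.ofReal_le_ofReal (pnorm_sub_center_rpow_le hρ0 hLf.le hLip (by positivity)
      (two_rpow_mul_cell_diam_le hρ0 hε hLf.le hs hN) (hRa hk) hc)
  have hcost_tail : ∫⁻ x in X \ Xbar, ENNReal.ofReal (pnorm ρ (f x - f (Δ x)) ^ ρ) ∂P ≤
      ENNReal.ofReal (ε ^ ρ / 2) := by
    rw [setLIntegral_congr_fun (hXm.diff hR.measurableSet) fun x hx => by
      rw [show Δ x = cbar from hR.quantMap_snoc_of_mem_diff hx c cbar]]
    refine (setLIntegral_pnorm_sub_rpow_le_of_lipschitz hρ0 hLf.le hLip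
      (integrable_pnorm_sub_rpow hρ hPm cbar).integrableOn).trans (ENNReal.ofReal_le_ofReal ?_)
    calc Lf ^ ρ * ∫ x in X \ Xbar, pnorm ρ (x - cbar) ^ ρ ∂P
        ≤ Lf ^ ρ * (ε ^ ρ / (2 * Lf ^ ρ)) := by gcongr
      _ = ε ^ ρ / 2 := by field_simp
  have hquant : eWassP ρ (P.map f) ((P.map Δ).map f) ≤ ENNReal.ofReal ε := by
    rw [Measure.map_map hf hΔm]
    refine eWassP_map_le_ofReal hρ0 hε.le P hf (hf.comp hΔm) ?_
    rw [← add_halves (ε ^ ρ), ENNReal.ofReal_add (by positivity) (by positivity)]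
    exact lintegral_le_add_of_le_on hXm hR.measurableSet hXbarX hPX hcost_cell hcost_tail
  exact abs_sSup_image_sub_sSup_image_le hε.le fun Q _ =>
    abs_WassP_sub_WassP_le hρ hε.le _ hquant

/-- Theorem: convergence rate. Let `f` be `L_f`-Lipschitz w.r.t. the
`L_ρ`-norm, `X̄ ⊆ X` a cube of side `s` with
`∫_{X \ X̄} ‖x - c̄‖^ρ dP ≤ ε^ρ/(2 L_f^ρ)`, let `R` be a uniform partition of `X̄` into
`N ≥ (2^{1/ρ} L_f d^{1/ρ} s / ε)^d` hypercubic regions of side `s / N^{1/d}` with centers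
`C`, and set `R* = R ∪ {X \ X̄}`, `C* = C ∪ {c̄}`. Then
`|sup_{Q ∈ B_θ(P)} W_ρ(f#Q, f#Δ_{R*,C*}#P) − sup_{Q ∈ B_θ(P)} W_ρ(f#Q, f#P)| ≤ ε`. -/
theorem stmt8 {d q N : ℕ} (ρ : ℝ) (hρ : 1 ≤ ρ) (θ : ℝ) (hθ : 0 ≤ θ)
    (ε : ℝ) (hε : 0 < ε) (Lf : ℝ) (hLf : 0 < Lf)
    (X : Set (Fin d → ℝ)) (hXm : MeasurableSet X) (Y : Set (Fin q → ℝ))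
    (P : Measure (Fin d → ℝ)) (hP : IsProbabilityMeasure P) (hPX : P X = 1)
    (hPm : HasFiniteMomentP ρ P)
    (f : (Fin d → ℝ) → (Fin q → ℝ)) (hf : Measurable f) (hfXY : Set.MapsTo f X Y)
    (hLip : ∀ x y, pnorm ρ (f x - f y) ≤ Lf * pnorm ρ (x - y))
    -- `X̄` is a cube of side length `s = ‖X̄‖_∞` contained in `X`
    (Xbar : Set (Fin d → ℝ)) (b : Fin d → ℝ) (s : ℝ) (hs : 0 ≤ s)
    (hXbar : Xbar = {x | ∀ i, b i ≤ x i ∧ x i ≤ b i + s})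
    (hXbarX : Xbar ⊆ X)
    -- the tail condition around `c̄ ∈ X`
    (cbar : Fin d → ℝ) (hcbar : cbar ∈ X)
    (htail : ∫ x in X \ Xbar, pnorm ρ (x - cbar) ^ ρ ∂P ≤ ε ^ ρ / (2 * Lf ^ ρ))
    -- `N ≥ (2^{1/ρ} L_f d^{1/ρ} ‖X̄‖_∞ / ε)^d`
    (hN : (2 ^ (1/ρ) * Lf * (d : ℝ) ^ (1/ρ) * s / ε) ^ (d : ℝ) ≤ (N : ℝ))
    -- `R` is a uniform partition of `X̄` into `N` hypercubic regions of side
    -- `s / N^{1/d}`, and `C` consists of the centers of those hypercubes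
    (R : Fin N → Set (Fin d → ℝ)) (hR : IsMeasPartition R Xbar)
    (c : Fin N → (Fin d → ℝ))
    (hcube : ∀ k, ∃ a : Fin d → ℝ,
      R k ⊆ {x | ∀ i, a i ≤ x i ∧ x i ≤ a i + s / (N : ℝ) ^ (1/(d : ℝ))} ∧
      ∀ i, c k i = a i + (s / (N : ℝ) ^ (1/(d : ℝ))) / 2) :
    |sSup ((fun Q => WassP ρ (Q.map f)
          ((P.map (quantMap (Fin.snoc R (X \ Xbar)) (Fin.snoc c cbar))).map f)) ''
        WassBallP ρ θ P X) -
      sSup ((fun Q => WassP ρ (Q.map f) (P.map f)) '' WassBallP ρ θ P X)| ≤ ε :=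
  stmt8_general ρ hρ θ ε hε Lf hLf X hXm P hP hPX hPm f hf hLip Xbar s hs hXbarX cbar htail hN R hR
    c hcube
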